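/- (Upper bound for solutions of 1-dim FDEs) Let α ∈ (0,1), T > 0, let f : [0,T] × ℝ → ℝ be continuous, satisfy the Lipschitz condition: there is a continuous function L : [0,T] → [0,∞) with |f(t,x) - f(t,y)| ≤ L(t)|x - y| for all t ∈ [0,T] and x, y ∈ ℝ, and satisfy f(t,0) = 0 for all t ∈ [0,T]. Let x : [0,T] → ℝ be a continuous solution of the Volterra integral equation x(t) = x(0) + (1/Γ(α)) ∫_0^t (t-τ)^(α-1) f(τ, x(τ)) dτ for all t ∈ [0,T]. Then for every t ∈ [0,T]: |x(t)| ≤ |x(0)| · E_α((max_{0 ≤ τ ≤ t} L(τ)) · t^α). -/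

import Mathlib

/-!
With `M = max_{[0,t]} L` and `I^α` the Riemann–Liouville integral, the Lipschitz bound and
`f(τ, 0) = 0` turn the Volterra equation into the fractional Gronwall inequality
`|x| ≤ |x(0)| + M I^α |x|` on `[0, t]`. Starting from a crude bound `|x| ≤ C` and iterating
`n` times, the Beta integral `I^α τ^(αk) / Γ(αk + 1) = τ^(α(k+1)) / Γ(α(k+1) + 1)` gives
`|x(s)| ≤ |x(0)| ∑_{k<n} (M s^α)^k / Γ(αk + 1) + C (M s^α)^n / Γ(αn + 1)`; the remainder is a term
of the convergent Mittag-Leffler series, so it tends to `0`.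
-/

open Real Set intervalIntegral

/-- The one-parameter Mittag-Leffler function `E_α(z) = ∑_{k=0}^∞ z^k / Γ(αk + 1)`. -/
noncomputable def mittagLeffler (α z : ℝ) : ℝ :=
  ∑' k : ℕ, z ^ k / Real.Gamma (α * k + 1)

namespace Real

open scoped Nat in
theorem factorial_floor_le_Gamma_add_one {y : ℝ} (hy : 1 ≤ y) :
    (⌊y⌋₊ ! : ℝ) ≤ Gamma (y + 1) := by
  have hfloor : (1 : ℝ) ≤ ⌊y⌋₊ := by exact_mod_cast Nat.le_floor (by exact_mod_cast hy)
  rw [← Gamma_nat_eq_factorial]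
  refine Gamma_strictMonoOn_Ici.monotoneOn ?_ ?_ ?_
  · simp only [mem_Ici]; linarith
  · simp only [mem_Ici]; linarith
  · linarith [Nat.floor_le (by linarith : 0 ≤ y)]

theorem rpow_sub_one_le_exp_mul_Gamma_add_one {B y : ℝ} (hB : 1 ≤ B) (hy : 1 ≤ y) :
    B ^ (y - 1) ≤ exp B * Gamma (y + 1) := calc
  B ^ (y - 1) ≤ B ^ (⌊y⌋₊ : ℝ) :=
    rpow_le_rpow_of_exponent_le hB (by have := Nat.lt_floor_add_one y; linarith)
  _ = B ^ ⌊y⌋₊ := rpow_natCast B _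
  _ ≤ exp B * ⌊y⌋₊.factorial := by
    rw [← div_le_iff₀ (by positivity)]; exact pow_div_factorial_le_exp _ (zero_le_one.trans hB) _
  _ ≤ exp B * Gamma (y + 1) := by gcongr; exact factorial_floor_le_Gamma_add_one hy

end Real

theorem summable_mittagLeffler {α : ℝ} (hα : 0 < α) (z : ℝ) :
    Summable fun k : ℕ => z ^ k / Gamma (α * k + 1) := by
  set B : ℝ := (2 * (|z| + 1)) ^ (1 / α)
  have hB : 1 ≤ B := one_le_rpow (by linarith [abs_nonneg z]) (by positivity)
  refine .of_norm_bounded_eventually_nat (summable_geometric_two.mul_left (B * exp B)) ?_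
  filter_upwards [Filter.eventually_ge_atTop ⌈1 / α⌉₊] with k hk
  have hαk : 1 ≤ α * k := by
    rw [← div_le_iff₀' hα]; exact (Nat.le_ceil _).trans (by exact_mod_cast hk)
  -- `B` is chosen so that `B ^ (α * k) = (2 * (|z| + 1)) ^ k`
  have hBk : (2 * (|z| + 1)) ^ k = B * B ^ (α * k - 1) := by
    rw [← rpow_one_add' (by positivity) (by linarith), add_sub_cancel, ← rpow_mul (by positivity),
      ← mul_assoc, one_div_mul_cancel hα.ne', one_mul, rpow_natCast]
  have hΓ : 0 < Gamma (α * k + 1) := Gamma_pos_of_pos (by linarith)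
  rw [norm_div, norm_pow, Real.norm_eq_abs, Real.norm_eq_abs, abs_of_pos hΓ, div_le_iff₀ hΓ]
  calc |z| ^ k ≤ (|z| + 1) ^ k := by gcongr; linarith
    _ = (2 * (|z| + 1)) ^ k * (1 / 2) ^ k := by rw [← mul_pow]; congr 1; ring
    _ ≤ B * (exp B * Gamma (α * k + 1)) * (1 / 2) ^ k := by
      rw [hBk]; gcongr; exact rpow_sub_one_le_exp_mul_Gamma_add_one hB hαk
    _ = B * exp B * (1 / 2) ^ k * Gamma (α * k + 1) := by ring

theorem integral_sub_rpow_mul_rpow {α β s : ℝ} (hα : 0 < α) (hβ : 0 < β) (hs : 0 < s) :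
    ∫ τ in (0 : ℝ)..s, (s - τ) ^ (α - 1) * τ ^ (β - 1)
      = Gamma α * Gamma β / Gamma (α + β) * s ^ (α + β - 1) := by
  apply Complex.ofReal_injective
  rw [← integral_ofReal]
  calc _ = ∫ τ in (0 : ℝ)..s, (τ : ℂ) ^ ((β : ℂ) - 1) * ((s : ℂ) - τ) ^ ((α : ℂ) - 1) := by
        refine integral_congr fun τ hτ => ?_
        rw [uIcc_of_le hs.le] at hτ
        rw [Complex.ofReal_mul, Complex.ofReal_cpow (by linarith [hτ.2]),
          Complex.ofReal_cpow hτ.1, mul_comm]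
        push_cast; ring
    _ = _ := by
        rw [Complex.betaIntegral_scaled β α hs,
          Complex.betaIntegral_eq_Gamma_mul_div _ _ (by simpa using hβ) (by simpa using hα)]
        push_cast [Complex.ofReal_cpow hs.le, ← Complex.Gamma_ofReal]
        ring_nf

noncomputable def riemannLiouvilleIntegral (α : ℝ) (g : ℝ → ℝ) (t : ℝ) : ℝ :=
  1 / Gamma α * ∫ τ in (0 : ℝ)..t, (t - τ) ^ (α - 1) * g τ

namespace riemannLiouvilleIntegral

variable {α s : ℝ} {g h : ℝ → ℝ}

theorem intervalIntegrable_kernel_mul (hα : 0 < α) (hs : 0 ≤ s) (hg : ContinuousOn g (Icc 0 s)) :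
    IntervalIntegrable (fun τ => (s - τ) ^ (α - 1) * g τ) MeasureTheory.volume 0 s := by
  have hkernel : IntervalIntegrable (fun τ : ℝ => (s - τ) ^ (α - 1)) MeasureTheory.volume 0 s := by
    simpa using ((intervalIntegrable_rpow' (a := 0) (b := s)
      (by linarith : -1 < α - 1)).comp_sub_left s).symm
  exact hkernel.mul_continuousOn (by rwa [uIcc_of_le hs])

theorem mono (hα : 0 < α) (hs : 0 ≤ s) (hg : ContinuousOn g (Icc 0 s))
    (hh : ContinuousOn h (Icc 0 s)) (hgh : ∀ τ ∈ Icc 0 s, g τ ≤ h τ) :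
    riemannLiouvilleIntegral α g s ≤ riemannLiouvilleIntegral α h s := by
  refine mul_le_mul_of_nonneg_left ?_ (one_div_nonneg.2 (Gamma_pos_of_pos hα).le)
  refine integral_mono_on hs (intervalIntegrable_kernel_mul hα hs hg)
    (intervalIntegrable_kernel_mul hα hs hh) fun τ hτ => ?_
  exact mul_le_mul_of_nonneg_left (hgh τ hτ) (rpow_nonneg (by linarith [hτ.2]) _)

theorem abs_le (hα : 0 < α) (hs : 0 ≤ s) (hh : ContinuousOn h (Icc 0 s))
    (hgh : ∀ τ ∈ Icc 0 s, |g τ| ≤ h τ) :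
    |riemannLiouvilleIntegral α g s| ≤ riemannLiouvilleIntegral α h s := by
  rw [riemannLiouvilleIntegral, abs_mul, abs_of_pos (one_div_pos.2 (Gamma_pos_of_pos hα))]
  refine mul_le_mul_of_nonneg_left ?_ (one_div_nonneg.2 (Gamma_pos_of_pos hα).le)
  rw [← Real.norm_eq_abs]
  refine norm_integral_le_of_norm_le hs (Filter.Eventually.of_forall fun τ hτ => ?_)
    (intervalIntegrable_kernel_mul hα hs hh)
  have hker : 0 ≤ (s - τ) ^ (α - 1) := rpow_nonneg (by linarith [hτ.2]) _
  rw [Real.norm_eq_abs, abs_mul, abs_of_nonneg hker]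
  exact mul_le_mul_of_nonneg_left (hgh τ (Ioc_subset_Icc_self hτ)) hker

theorem const_mul (c : ℝ) :
    riemannLiouvilleIntegral α (fun τ => c * g τ) s = c * riemannLiouvilleIntegral α g s := by
  simp only [riemannLiouvilleIntegral, mul_left_comm _ c, integral_const_mul]

theorem add (hα : 0 < α) (hs : 0 ≤ s) (hg : ContinuousOn g (Icc 0 s))
    (hh : ContinuousOn h (Icc 0 s)) :
    riemannLiouvilleIntegral α (fun τ => g τ + h τ) s
      = riemannLiouvilleIntegral α g s + riemannLiouvilleIntegral α h s := by
  simp only [riemannLiouvilleIntegral, mul_add]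
  rw [integral_add (intervalIntegrable_kernel_mul hα hs hg)
    (intervalIntegrable_kernel_mul hα hs hh), mul_add]

theorem finsetSum {ι : Type*} (S : Finset ι) {g : ι → ℝ → ℝ} (hα : 0 < α) (hs : 0 ≤ s)
    (hg : ∀ i ∈ S, ContinuousOn (g i) (Icc 0 s)) :
    riemannLiouvilleIntegral α (fun τ => ∑ i ∈ S, g i τ) s
      = ∑ i ∈ S, riemannLiouvilleIntegral α (g i) s := by
  simp only [riemannLiouvilleIntegral, Finset.mul_sum]
  rw [integral_finsetSum fun i hi => intervalIntegrable_kernel_mul hα hs (hg i hi),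
    Finset.mul_sum]

theorem rpow (hα : 0 < α) {β : ℝ} (hβ : 0 < β) (hs : 0 < s) :
    riemannLiouvilleIntegral α (fun τ => τ ^ (β - 1)) s
      = Gamma β / Gamma (α + β) * s ^ (α + β - 1) := by
  rw [riemannLiouvilleIntegral, integral_sub_rpow_mul_rpow hα hβ hs]
  field_simp [(Gamma_pos_of_pos hα).ne']

theorem abs_le_add_mul_abs_of_eq_add {α M s : ℝ} {x F : ℝ → ℝ} (hα : 0 < α) (hs : 0 ≤ s)
    (hx : ContinuousOn x (Icc 0 s)) (hF : ∀ τ ∈ Icc 0 s, |F τ| ≤ M * |x τ|)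
    (hxs : x s = x 0 + riemannLiouvilleIntegral α F s) :
    |x s| ≤ |x 0| + M * riemannLiouvilleIntegral α (fun τ => |x τ|) s := by
  have hMx : ContinuousOn (fun τ => M * |x τ|) (Icc 0 s) := continuousOn_const.mul hx.abs
  calc |x s| ≤ |x 0| + |riemannLiouvilleIntegral α F s| := hxs ▸ abs_add_le _ _
    _ ≤ |x 0| + riemannLiouvilleIntegral α (fun τ => M * |x τ|) s := by
        gcongr; exact abs_le hα hs hMx hF
    _ = |x 0| + M * riemannLiouvilleIntegral α (fun τ => |x τ|) s := by rw [const_mul]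

end riemannLiouvilleIntegral

noncomputable def mittagLefflerTerm (α M : ℝ) (k : ℕ) (s : ℝ) : ℝ :=
  M ^ k * s ^ (α * k) / Gamma (α * k + 1)

namespace mittagLefflerTerm

variable {α M s : ℝ} {k : ℕ}

@[simp]
theorem zero : mittagLefflerTerm α M 0 s = 1 := by simp [mittagLefflerTerm]

theorem eq_div_Gamma (hs : 0 ≤ s) :
    mittagLefflerTerm α M k s = (M * s ^ α) ^ k / Gamma (α * k + 1) := by
  rw [mittagLefflerTerm, mul_pow, ← rpow_natCast (s ^ α), ← rpow_mul hs]

theorem continuous (hα : 0 ≤ α) : Continuous (mittagLefflerTerm α M k) :=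
  (continuous_const.mul (continuous_rpow_const (by positivity))).div_const _

theorem mul_riemannLiouvilleIntegral (hα : 0 < α) (hs : 0 ≤ s) :
    M * riemannLiouvilleIntegral α (mittagLefflerTerm α M k) s
      = mittagLefflerTerm α M (k + 1) s := by
  rcases hs.eq_or_lt with rfl | hs
  · rw [mittagLefflerTerm, zero_rpow (by positivity)]
    simp [riemannLiouvilleIntegral]
  have hβ : 0 < α * k + 1 := by positivity
  have hterm : mittagLefflerTerm α M k
      = fun τ => M ^ k / Gamma (α * k + 1) * τ ^ (α * k + 1 - 1) := by
    funext τ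
    rw [mittagLefflerTerm, add_sub_cancel_right, mul_div_right_comm]
  rw [hterm, riemannLiouvilleIntegral.const_mul, riemannLiouvilleIntegral.rpow hα hβ hs,
    mittagLefflerTerm, show α + (α * k + 1) - 1 = α * (k + 1 : ℕ) by push_cast; ring,
    show α + (α * k + 1) = α * (k + 1 : ℕ) + 1 by push_cast; ring]
  field_simp [(Gamma_pos_of_pos hβ).ne']
  ring

end mittagLefflerTerm

/-- What `n` steps of the iteration `v ↦ a + M I^α v` make of the constant bound `C`. -/
noncomputable def mittagLefflerIterate (α M a C : ℝ) (n : ℕ) (s : ℝ) : ℝ :=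
  a * ∑ k ∈ Finset.range n, mittagLefflerTerm α M k s + C * mittagLefflerTerm α M n s

namespace mittagLefflerIterate

variable {α M a C s : ℝ}

@[simp]
theorem zero : mittagLefflerIterate α M a C 0 s = C := by simp [mittagLefflerIterate]

theorem continuous (hα : 0 ≤ α) (n : ℕ) : Continuous (mittagLefflerIterate α M a C n) :=
  (continuous_const.mul (continuous_finsetSum _ fun _ _ => mittagLefflerTerm.continuous hα)).add
    (continuous_const.mul (mittagLefflerTerm.continuous hα))

theorem add_mul_riemannLiouvilleIntegral (hα : 0 < α) (hs : 0 ≤ s) (n : ℕ) :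
    a + M * riemannLiouvilleIntegral α (mittagLefflerIterate α M a C n) s
      = mittagLefflerIterate α M a C (n + 1) s := by
  have hterm k : ContinuousOn (mittagLefflerTerm α M k) (Icc 0 s) :=
    (mittagLefflerTerm.continuous hα.le).continuousOn
  have hsum :
      ContinuousOn (fun τ => a * ∑ k ∈ Finset.range n, mittagLefflerTerm α M k τ) (Icc 0 s) :=
    continuousOn_const.mul (continuousOn_finsetSum _ fun k _ => hterm k)
  have hlast : ContinuousOn (fun τ => C * mittagLefflerTerm α M n τ) (Icc 0 s) :=
    continuousOn_const.mul (hterm n)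
  rw [show mittagLefflerIterate α M a C n = fun τ =>
      a * ∑ k ∈ Finset.range n, mittagLefflerTerm α M k τ + C * mittagLefflerTerm α M n τ from rfl,
    riemannLiouvilleIntegral.add hα hs hsum hlast,
    riemannLiouvilleIntegral.const_mul, riemannLiouvilleIntegral.const_mul,
    riemannLiouvilleIntegral.finsetSum _ hα hs fun k _ => hterm k, mittagLefflerIterate,
    Finset.sum_range_succ', mittagLefflerTerm.zero]
  simp only [← mittagLefflerTerm.mul_riemannLiouvilleIntegral hα hs, ← Finset.mul_sum]
  ring

theorem tendsto (hα : 0 < α) {t : ℝ} (ht : 0 ≤ t) :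
    Filter.Tendsto (fun n => mittagLefflerIterate α M a C n t) Filter.atTop
      (nhds (a * mittagLeffler α (M * t ^ α))) := by
  have hsummable := summable_mittagLeffler hα (M * t ^ α)
  simp only [mittagLefflerIterate, mittagLefflerTerm.eq_div_Gamma ht]
  simpa [mittagLeffler] using (hsummable.hasSum.tendsto_sum_nat.const_mul a).add
    (hsummable.tendsto_atTop_zero.const_mul C)

end mittagLefflerIterate

theorem le_mul_mittagLeffler_of_le_add_riemannLiouvilleIntegral {α M a t : ℝ} {u : ℝ → ℝ}
    (hα : 0 < α) (hM : 0 ≤ M) (ht : 0 ≤ t) (hu : ContinuousOn u (Icc 0 t))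
    (h : ∀ s ∈ Icc 0 t, u s ≤ a + M * riemannLiouvilleIntegral α u s) :
    u t ≤ a * mittagLeffler α (M * t ^ α) := by
  obtain ⟨C, hC⟩ := isCompact_Icc.bddAbove_image hu
  have hiterate n : ∀ s ∈ Icc 0 t, u s ≤ mittagLefflerIterate α M a C n s := by
    induction n with
    | zero => exact fun s hs => by simpa using hC (mem_image_of_mem u hs)
    | succ n ih =>
      intro s hs
      have hsub : Icc 0 s ⊆ Icc 0 t := Icc_subset_Icc_right hs.2
      calc u s ≤ a + M * riemannLiouvilleIntegral α u s := h s hs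
        _ ≤ a + M * riemannLiouvilleIntegral α (mittagLefflerIterate α M a C n) s := by
          gcongr
          exact riemannLiouvilleIntegral.mono hα hs.1 (hu.mono hsub)
            (mittagLefflerIterate.continuous hα.le n).continuousOn fun τ hτ => ih τ (hsub hτ)
        _ = mittagLefflerIterate α M a C (n + 1) s :=
          mittagLefflerIterate.add_mul_riemannLiouvilleIntegral hα hs.1 n
  exact ge_of_tendsto' (mittagLefflerIterate.tendsto hα ht) fun n => hiterate n t ⟨ht, le_rfl⟩

theorem upper_bound_1dim_general
    (α T : ℝ) (hα : α ∈ Set.Ioo (0 : ℝ) 1)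
    (f : ℝ → ℝ → ℝ)
    (L : ℝ → ℝ) (hL : ContinuousOn L (Set.Icc 0 T))
    (hLip : ∀ t ∈ Set.Icc (0 : ℝ) T, ∀ x y : ℝ, |f t x - f t y| ≤ L t * |x - y|)
    (hf0 : ∀ t ∈ Set.Icc (0 : ℝ) T, f t 0 = 0)
    (x : ℝ → ℝ) (hx : ContinuousOn x (Set.Icc 0 T))
    (hvolt : ∀ t ∈ Set.Icc (0 : ℝ) T,
      x t = x 0 + (1 / Real.Gamma α) * ∫ τ in (0 : ℝ)..t, (t - τ) ^ (α - 1) * f τ (x τ)) :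
    ∀ t ∈ Set.Icc (0 : ℝ) T,
      |x t| ≤ |x 0| * mittagLeffler α (sSup (L '' Set.Icc 0 t) * t ^ α) := by
  intro t ht
  set M := sSup (L '' Icc 0 t)
  have hsub : Icc 0 t ⊆ Icc 0 T := Icc_subset_Icc_right ht.2
  have hLM : ∀ τ ∈ Icc 0 t, L τ ≤ M := fun τ hτ =>
    le_csSup (isCompact_Icc.bddAbove_image (hL.mono hsub)) (mem_image_of_mem L hτ)
  have hM : 0 ≤ M := by
    have hLt := hLip t ht 1 0
    rw [sub_zero, abs_one, mul_one] at hLt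
    exact (abs_nonneg _).trans (hLt.trans (hLM t ⟨ht.1, le_rfl⟩))
  have hfx : ∀ τ ∈ Icc 0 t, |f τ (x τ)| ≤ M * |x τ| := fun τ hτ => by
    have h := hLip τ (hsub hτ) (x τ) 0
    rw [hf0 τ (hsub hτ), sub_zero, sub_zero] at h
    exact h.trans (mul_le_mul_of_nonneg_right (hLM τ hτ) (abs_nonneg _))
  refine le_mul_mittagLeffler_of_le_add_riemannLiouvilleIntegral hα.1 hM ht.1
    (hx.mono hsub).abs fun s hs => ?_
  have hsubs : Icc 0 s ⊆ Icc 0 t := Icc_subset_Icc_right hs.2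
  exact riemannLiouvilleIntegral.abs_le_add_mul_abs_of_eq_add hα.1 hs.1
    ((hx.mono hsub).mono hsubs) (fun τ hτ => hfx τ (hsubs hτ)) (hvolt s (hsub hs))

/-- Upper bound for solutions of one-dimensional Caputo FDEs (in Volterra integral form)
whose right-hand side vanishes at the origin:
`|x(t)| ≤ |x(0)| E_α((max_{0 ≤ τ ≤ t} L(τ)) t^α)`. -/
theorem upper_bound_1dim
    (α T : ℝ) (hα : α ∈ Set.Ioo (0 : ℝ) 1) (hT : 0 < T)
    (f : ℝ → ℝ → ℝ)
    (hf : ContinuousOn (fun p : ℝ × ℝ => f p.1 p.2) (Set.Icc 0 T ×ˢ (Set.univ : Set ℝ)))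
    (L : ℝ → ℝ) (hL : ContinuousOn L (Set.Icc 0 T))
    (hLnonneg : ∀ t ∈ Set.Icc (0 : ℝ) T, 0 ≤ L t)
    (hLip : ∀ t ∈ Set.Icc (0 : ℝ) T, ∀ x y : ℝ, |f t x - f t y| ≤ L t * |x - y|)
    (hf0 : ∀ t ∈ Set.Icc (0 : ℝ) T, f t 0 = 0)
    (x : ℝ → ℝ) (hx : ContinuousOn x (Set.Icc 0 T))
    (hvolt : ∀ t ∈ Set.Icc (0 : ℝ) T,
      x t = x 0 + (1 / Real.Gamma α) * ∫ τ in (0 : ℝ)..t, (t - τ) ^ (α - 1) * f τ (x τ)) :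
    ∀ t ∈ Set.Icc (0 : ℝ) T,
      |x t| ≤ |x 0| * mittagLeffler α (sSup (L '' Set.Icc 0 t) * t ^ α) :=
  upper_bound_1dim_general α T hα f L hL hLip hf0 x hx hvolt
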